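/- arXiv:1903.07470 — 2 statements merged into one kernel-verified Lean document; each statement's English description precedes it below -/
import Mathlib

section
/- Let ρ̄ be one of the four Bell states, with L_z ρ̄ = λ̄_z ρ̄ and L_x ρ̄ = λ̄_x ρ̄ (so λ̄_z, λ̄_x ∈ {1, −1}). Then for every ρ in the state space S, writing P₁(ρ) = λ̄_z − Tr(L_z ρ) and P₂(ρ) = λ̄_x − Tr(L_x ρ), one has P₁(ρ)² + P₂(ρ)² ≥ 2(1 − Tr(ρρ̄))². -/
open Matrix ComplexOrder

noncomputable section

/-- Pauli matrices. -/
def σx : Matrix (Fin 2) (Fin 2) ℂ := !![0, 1; 1, 0]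
def σy : Matrix (Fin 2) (Fin 2) ℂ := !![0, -Complex.I; Complex.I, 0]
def σz : Matrix (Fin 2) (Fin 2) ℂ := !![1, 0; 0, -1]
def id2 : Matrix (Fin 2) (Fin 2) ℂ := 1

/-- Kronecker product of two `2 × 2` matrices, indexed by `Fin 4`
(with the identification `(i,k) ↦ 2*i + k`). -/
def kron (A B : Matrix (Fin 2) (Fin 2) ℂ) : Matrix (Fin 4) (Fin 4) ℂ :=
  fun i j => A ⟨i.val / 2, by omega⟩ ⟨j.val / 2, by omega⟩ *
             B ⟨i.val % 2, by omega⟩ ⟨j.val % 2, by omega⟩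

/-- The measurement matrices `L_z = σ_z ⊗ σ_z` and `L_x = σ_x ⊗ σ_x`. -/
def Lz : Matrix (Fin 4) (Fin 4) ℂ := kron σz σz
def Lx : Matrix (Fin 4) (Fin 4) ℂ := kron σx σx

/-- The Bell vectors. -/
def PsiPlus : Fin 4 → ℂ := ![(Real.sqrt 2 : ℂ)⁻¹, 0, 0, (Real.sqrt 2 : ℂ)⁻¹]
def PsiMinus : Fin 4 → ℂ := ![(Real.sqrt 2 : ℂ)⁻¹, 0, 0, -(Real.sqrt 2 : ℂ)⁻¹]
def PhiPlus : Fin 4 → ℂ := ![0, (Real.sqrt 2 : ℂ)⁻¹, (Real.sqrt 2 : ℂ)⁻¹, 0]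
def PhiMinus : Fin 4 → ℂ := ![0, (Real.sqrt 2 : ℂ)⁻¹, -(Real.sqrt 2 : ℂ)⁻¹, 0]

/-- The rank-one projection `ξξ*`. -/
def outer (ξ : Fin 4 → ℂ) : Matrix (Fin 4) (Fin 4) ℂ := Matrix.vecMulVec ξ (star ξ)

/-- The set of the four Bell states. -/
def BellStates : Set (Matrix (Fin 4) (Fin 4) ℂ) :=
  {outer PsiPlus, outer PsiMinus, outer PhiPlus, outer PhiMinus}

/-- The state space `S`. -/
def IsState (ρ : Matrix (Fin 4) (Fin 4) ℂ) : Prop := ρ.PosSemidef ∧ ρ.trace = 1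

def Λ₁ (ρ : Matrix (Fin 4) (Fin 4) ℂ) : ℝ := (ρ 0 0).re + (ρ 3 3).re
def Λ₂ (ρ : Matrix (Fin 4) (Fin 4) ℂ) : ℝ := (ρ 1 1).re + (ρ 2 2).re
def Γ (ρ : Matrix (Fin 4) (Fin 4) ℂ) : ℝ := 2 * (ρ 1 2).re + 2 * (ρ 0 3).re
def Δ (ρ : Matrix (Fin 4) (Fin 4) ℂ) : ℝ := Λ₁ ρ * (ρ 1 2).re - Λ₂ ρ * (ρ 0 3).re

lemma key_ineq (L1 L2 a b : ℝ) (hs : L1 + L2 = 1)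
    (ha : 2*|a| ≤ L1) (hb : 2*|b| ≤ L2) :
    4*L2^2 + (1-2*a-2*b)^2 ≥ (1+L2-2*a)^2/2 := by
  have ha1 : 2*a ≤ L1 := (le_trans (by nlinarith [le_abs_self a]) ha)
  have ha2 : -L1 ≤ 2*a := by nlinarith [neg_abs_le a]
  have hb1 : 2*b ≤ L2 := (le_trans (by nlinarith [le_abs_self b]) hb)
  have hb2 : -L2 ≤ 2*b := by nlinarith [neg_abs_le b]
  nlinarith [sq_nonneg (1-2*a-3*L2), sq_nonneg (L2-2*b),
    mul_nonneg (by linarith : (0:ℝ) ≤ L2-2*b) (by linarith : (0:ℝ) ≤ 2-4*a-2*b-L2)]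

lemma traceLz (M : Matrix (Fin 4) (Fin 4) ℂ) :
    (Lz * M).trace = M 0 0 - M 1 1 - M 2 2 + M 3 3 := by
  simp [Matrix.trace, Matrix.mul_apply, Fin.sum_univ_four, Lz, kron, σz, Matrix.diag,
    show ((2:Fin 4)).val = 2 from rfl, show ((3:Fin 4)).val = 3 from rfl]
  ring

lemma traceLx (M : Matrix (Fin 4) (Fin 4) ℂ) :
    (Lx * M).trace = M 3 0 + M 2 1 + M 1 2 + M 0 3 := by
  simp [Matrix.trace, Matrix.mul_apply, Fin.sum_univ_four, Lx, kron, σx, Matrix.diag,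
    show ((2:Fin 4)).val = 2 from rfl, show ((3:Fin 4)).val = 3 from rfl]

lemma sq2 : ((Real.sqrt 2 : ℂ))⁻¹ * ((Real.sqrt 2 : ℂ))⁻¹ = 1/2 := by
  rw [← mul_inv]; norm_cast
  rw [Real.mul_self_sqrt (by norm_num)]; norm_num

lemma sstar : star ((Real.sqrt 2 : ℂ)⁻¹) = (Real.sqrt 2 : ℂ)⁻¹ := by
  simp [Complex.star_def, Complex.conj_ofReal, map_inv₀]

-- entries of the Bell projections
lemma PsiPlus_entries : outer PsiPlus 0 0 = 1/2 ∧ outer PsiPlus 0 3 = 1/2 ∧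
    outer PsiPlus 3 0 = 1/2 ∧ outer PsiPlus 3 3 = 1/2 ∧ outer PsiPlus 1 1 = 0 ∧
    outer PsiPlus 2 2 = 0 ∧ outer PsiPlus 1 2 = 0 ∧ outer PsiPlus 2 1 = 0 := by
  simp [outer, PsiPlus, Matrix.vecMulVec_apply, sstar, sq2]

lemma PsiMinus_entries : outer PsiMinus 0 0 = 1/2 ∧ outer PsiMinus 0 3 = -(1/2) ∧
    outer PsiMinus 3 0 = -(1/2) ∧ outer PsiMinus 3 3 = 1/2 ∧ outer PsiMinus 1 1 = 0 ∧
    outer PsiMinus 2 2 = 0 ∧ outer PsiMinus 1 2 = 0 ∧ outer PsiMinus 2 1 = 0 := by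
  simp [outer, PsiMinus, Matrix.vecMulVec_apply, sstar, sq2]

lemma PhiPlus_entries : outer PhiPlus 1 1 = 1/2 ∧ outer PhiPlus 1 2 = 1/2 ∧
    outer PhiPlus 2 1 = 1/2 ∧ outer PhiPlus 2 2 = 1/2 ∧ outer PhiPlus 0 0 = 0 ∧
    outer PhiPlus 3 3 = 0 ∧ outer PhiPlus 0 3 = 0 ∧ outer PhiPlus 3 0 = 0 := by
  simp [outer, PhiPlus, Matrix.vecMulVec_apply, sstar, sq2]

lemma PhiMinus_entries : outer PhiMinus 1 1 = 1/2 ∧ outer PhiMinus 1 2 = -(1/2) ∧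
    outer PhiMinus 2 1 = -(1/2) ∧ outer PhiMinus 2 2 = 1/2 ∧ outer PhiMinus 0 0 = 0 ∧
    outer PhiMinus 3 3 = 0 ∧ outer PhiMinus 0 3 = 0 ∧ outer PhiMinus 3 0 = 0 := by
  simp [outer, PhiMinus, Matrix.vecMulVec_apply, sstar, sq2]

lemma tr_mul_outer (ρ : Matrix (Fin 4) (Fin 4) ℂ) (ξ : Fin 4 → ℂ) :
    (ρ * outer ξ).trace = ∑ i, ∑ k, ρ i k * (ξ k * star (ξ i)) := by
  simp [Matrix.trace, Matrix.mul_apply, outer, Matrix.vecMulVec_apply, Matrix.diag]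

lemma trPsiPlus (ρ : Matrix (Fin 4) (Fin 4) ℂ) :
    (ρ * outer PsiPlus).trace * 2 = ρ 0 0 + ρ 0 3 + ρ 3 0 + ρ 3 3 := by
  rw [tr_mul_outer]
  simp [PsiPlus, Fin.sum_univ_four, sstar, sq2]
  ring

lemma trPsiMinus (ρ : Matrix (Fin 4) (Fin 4) ℂ) :
    (ρ * outer PsiMinus).trace * 2 = ρ 0 0 - ρ 0 3 - ρ 3 0 + ρ 3 3 := by
  rw [tr_mul_outer]
  simp [PsiMinus, Fin.sum_univ_four, sstar, sq2]
  ring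

lemma trPhiPlus (ρ : Matrix (Fin 4) (Fin 4) ℂ) :
    (ρ * outer PhiPlus).trace * 2 = ρ 1 1 + ρ 1 2 + ρ 2 1 + ρ 2 2 := by
  rw [tr_mul_outer]
  simp [PhiPlus, Fin.sum_univ_four, sstar, sq2]
  ring

lemma trPhiMinus (ρ : Matrix (Fin 4) (Fin 4) ℂ) :
    (ρ * outer PhiMinus).trace * 2 = ρ 1 1 - ρ 1 2 - ρ 2 1 + ρ 2 2 := by
  rw [tr_mul_outer]
  simp [PhiMinus, Fin.sum_univ_four, sstar, sq2]
  ring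

set_option maxHeartbeats 2000000 in
/-- if `ρ̄` is a Bell state with `L_z ρ̄ = λ̄_z ρ̄` and `L_x ρ̄ = λ̄_x ρ̄`,
then `P₁(ρ)² + P₂(ρ)² ≥ 2(1 - Tr(ρρ̄))²` for every state `ρ`, where
`P₁(ρ) = λ̄_z - Tr(L_z ρ)` and `P₂(ρ) = λ̄_x - Tr(L_x ρ)`. -/
theorem P_sq_sum_lower_bound (ρbar : Matrix (Fin 4) (Fin 4) ℂ) (hbell : ρbar ∈ BellStates)
    (lamz lamx : ℝ) (hz : Lz * ρbar = (lamz : ℂ) • ρbar) (hx : Lx * ρbar = (lamx : ℂ) • ρbar)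
    (ρ : Matrix (Fin 4) (Fin 4) ℂ) (hρ : IsState ρ) :
    (lamz - ((Lz * ρ).trace).re) ^ 2 + (lamx - ((Lx * ρ).trace).re) ^ 2 ≥
      2 * (1 - ((ρ * ρbar).trace).re) ^ 2 := by
  obtain ⟨hpsd, htr⟩ := hρ
  have hherm := hpsd.1
  have h30 : ρ 3 0 = star (ρ 0 3) := by
    have := congrFun (congrFun hherm 3) 0
    simpa [Matrix.conjTranspose_apply] using this.symm
  have h21 : ρ 2 1 = star (ρ 1 2) := by
    have := congrFun (congrFun hherm 2) 1
    simpa [Matrix.conjTranspose_apply] using this.symm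
  have h30re : (ρ 3 0).re = (ρ 0 3).re := by rw [h30]; simp
  have h21re : (ρ 2 1).re = (ρ 1 2).re := by rw [h21]; simp
  have htrre : (ρ 0 0).re + (ρ 1 1).re + (ρ 2 2).re + (ρ 3 3).re = 1 := by
    have := congrArg Complex.re htr
    simpa [Matrix.trace, Fin.sum_univ_four, Matrix.diag] using this
  have q : ∀ (x : Fin 4 → ℂ), 0 ≤ (star x ⬝ᵥ ρ.mulVec x).re := fun x => by
    have := hpsd.dotProduct_mulVec_nonneg x; rw [Complex.le_def] at this
    simpa using this.1
  have q1 := q ![1,0,0,1]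
  have q2 := q ![1,0,0,-1]
  have q3 := q ![0,1,1,0]
  have q4 := q ![0,1,-1,0]
  simp [dotProduct, Matrix.mulVec, Fin.sum_univ_four] at q1 q2 q3 q4
  have ha : 2*|(ρ 0 3).re| ≤ (ρ 0 0).re + (ρ 3 3).re := by
    rcases abs_cases ((ρ 0 3).re) with ⟨h,_⟩ | ⟨h,_⟩ <;> rw [h] <;> [linarith [q2]; linarith [q1]]
  have hb : 2*|(ρ 1 2).re| ≤ (ρ 1 1).re + (ρ 2 2).re := by
    rcases abs_cases ((ρ 1 2).re) with ⟨h,_⟩ | ⟨h,_⟩ <;> rw [h] <;> [linarith [q4]; linarith [q3]]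
  have TZ : ((Lz * ρ).trace).re = 1 - 2*((ρ 1 1).re + (ρ 2 2).re) := by
    rw [traceLz]; simp; linarith
  have TX : ((Lx * ρ).trace).re = 2*(ρ 0 3).re + 2*(ρ 1 2).re := by
    rw [traceLx]; simp; linarith
  simp only [BellStates, Set.mem_insert_iff, Set.mem_singleton_iff] at hbell
  rcases hbell with rfl | rfl | rfl | rfl
  · -- PsiPlus
    obtain ⟨e00, e03, e30, e33, e11, e22, e12, e21⟩ := PsiPlus_entries
    have htrb : (outer PsiPlus).trace = 1 := by
      simp [Matrix.trace, Fin.sum_univ_four, Matrix.diag, e00, e11, e22, e33]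
      norm_num
    have hz' := congrArg Matrix.trace hz
    rw [traceLz, Matrix.trace_smul, htrb, e00, e11, e22, e33] at hz'
    have hlamz : lamz = 1 := by
      have : ((lamz:ℝ):ℂ) = 1 := by rw [smul_eq_mul, mul_one] at hz'; rw [← hz']; norm_num
      exact_mod_cast this
    have hx' := congrArg Matrix.trace hx
    rw [traceLx, Matrix.trace_smul, htrb, e30, e21, e12, e03] at hx'
    have hlamx : lamx = 1 := by
      have : ((lamx:ℝ):ℂ) = 1 := by rw [smul_eq_mul, mul_one] at hx'; rw [← hx']; norm_num
      exact_mod_cast this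
    have hT : ((ρ * outer PsiPlus).trace).re
        = (1 - ((ρ 1 1).re + (ρ 2 2).re) + 2*(ρ 0 3).re)/2 := by
      have := congrArg Complex.re (trPsiPlus ρ)
      simp [Complex.mul_re] at this
      rw [h30re] at this; linarith
    rw [TZ, TX, hT, hlamz, hlamx]
    nlinarith [key_ineq (1 - ((ρ 1 1).re + (ρ 2 2).re)) ((ρ 1 1).re + (ρ 2 2).re)
      ((ρ 0 3).re) ((ρ 1 2).re) (by ring) (by linarith) hb]
  · -- PsiMinus
    obtain ⟨e00, e03, e30, e33, e11, e22, e12, e21⟩ := PsiMinus_entries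
    have htrb : (outer PsiMinus).trace = 1 := by
      simp [Matrix.trace, Fin.sum_univ_four, Matrix.diag, e00, e11, e22, e33]
      norm_num
    have hz' := congrArg Matrix.trace hz
    rw [traceLz, Matrix.trace_smul, htrb, e00, e11, e22, e33] at hz'
    have hlamz : lamz = 1 := by
      have : ((lamz:ℝ):ℂ) = 1 := by rw [smul_eq_mul, mul_one] at hz'; rw [← hz']; norm_num
      exact_mod_cast this
    have hx' := congrArg Matrix.trace hx
    rw [traceLx, Matrix.trace_smul, htrb, e30, e21, e12, e03] at hx'
    have hlamx : lamx = -1 := by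
      have : ((lamx:ℝ):ℂ) = -1 := by rw [smul_eq_mul, mul_one] at hx'; rw [← hx']; norm_num
      exact_mod_cast this
    have hT : ((ρ * outer PsiMinus).trace).re
        = (1 - ((ρ 1 1).re + (ρ 2 2).re) - 2*(ρ 0 3).re)/2 := by
      have := congrArg Complex.re (trPsiMinus ρ)
      simp [Complex.mul_re] at this
      rw [h30re] at this; linarith
    rw [TZ, TX, hT, hlamz, hlamx]
    nlinarith [key_ineq (1 - ((ρ 1 1).re + (ρ 2 2).re)) ((ρ 1 1).re + (ρ 2 2).re)
      (-(ρ 0 3).re) (-(ρ 1 2).re) (by ring) (by rw [abs_neg]; linarith) (by rwa [abs_neg])]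
  · -- PhiPlus
    obtain ⟨e11, e12, e21, e22, e00, e33, e03, e30⟩ := PhiPlus_entries
    have htrb : (outer PhiPlus).trace = 1 := by
      simp [Matrix.trace, Fin.sum_univ_four, Matrix.diag, e00, e11, e22, e33]
      norm_num
    have hz' := congrArg Matrix.trace hz
    rw [traceLz, Matrix.trace_smul, htrb, e00, e11, e22, e33] at hz'
    have hlamz : lamz = -1 := by
      have : ((lamz:ℝ):ℂ) = -1 := by rw [smul_eq_mul, mul_one] at hz'; rw [← hz']; norm_num
      exact_mod_cast this
    have hx' := congrArg Matrix.trace hx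
    rw [traceLx, Matrix.trace_smul, htrb, e30, e21, e12, e03] at hx'
    have hlamx : lamx = 1 := by
      have : ((lamx:ℝ):ℂ) = 1 := by rw [smul_eq_mul, mul_one] at hx'; rw [← hx']; norm_num
      exact_mod_cast this
    have hT : ((ρ * outer PhiPlus).trace).re
        = (((ρ 1 1).re + (ρ 2 2).re) + 2*(ρ 1 2).re)/2 := by
      have := congrArg Complex.re (trPhiPlus ρ)
      simp [Complex.mul_re] at this
      rw [h21re] at this; linarith
    rw [TZ, TX, hT, hlamz, hlamx]
    nlinarith [key_ineq ((ρ 1 1).re + (ρ 2 2).re) (1 - ((ρ 1 1).re + (ρ 2 2).re))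
      ((ρ 1 2).re) ((ρ 0 3).re) (by ring) hb (by linarith)]
  · -- PhiMinus
    obtain ⟨e11, e12, e21, e22, e00, e33, e03, e30⟩ := PhiMinus_entries
    have htrb : (outer PhiMinus).trace = 1 := by
      simp [Matrix.trace, Fin.sum_univ_four, Matrix.diag, e00, e11, e22, e33]
      norm_num
    have hz' := congrArg Matrix.trace hz
    rw [traceLz, Matrix.trace_smul, htrb, e00, e11, e22, e33] at hz'
    have hlamz : lamz = -1 := by
      have : ((lamz:ℝ):ℂ) = -1 := by rw [smul_eq_mul, mul_one] at hz'; rw [← hz']; norm_num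
      exact_mod_cast this
    have hx' := congrArg Matrix.trace hx
    rw [traceLx, Matrix.trace_smul, htrb, e30, e21, e12, e03] at hx'
    have hlamx : lamx = -1 := by
      have : ((lamx:ℝ):ℂ) = -1 := by rw [smul_eq_mul, mul_one] at hx'; rw [← hx']; norm_num
      exact_mod_cast this
    have hT : ((ρ * outer PhiMinus).trace).re
        = (((ρ 1 1).re + (ρ 2 2).re) - 2*(ρ 1 2).re)/2 := by
      have := congrArg Complex.re (trPhiMinus ρ)
      simp [Complex.mul_re] at this
      rw [h21re] at this; linarith
    rw [TZ, TX, hT, hlamz, hlamx]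
    nlinarith [key_ineq ((ρ 1 1).re + (ρ 2 2).re) (1 - ((ρ 1 1).re + (ρ 2 2).re))
      (-(ρ 1 2).re) (-(ρ 0 3).re) (by ring) (by rwa [abs_neg]) (by rw [abs_neg]; linarith)]
end
end

section
/- Let ρ̄ = Ψ₊Ψ₊* be the target Bell state and write X(ρ) = Tr(ρρ̄). Then for every ρ in the state space S: 0 ≤ 1 − Tr(L_z ρ) = 2Λ₂(ρ) ≤ 2(1 − X(ρ)) and 0 ≤ 1 − Tr(L_x ρ) = 1 − Γ(ρ) ≤ 4(1 − X(ρ)). -/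
open Matrix ComplexOrder

noncomputable section

lemma Lz_eq : Lz = !![1,0,0,0; 0,-1,0,0; 0,0,-1,0; 0,0,0,1] := by
  ext i j; fin_cases i <;> fin_cases j <;> simp [Lz, kron, σz, Matrix.vecHead, Matrix.vecTail]

lemma Lx_eq : Lx = !![0,0,0,1; 0,0,1,0; 0,1,0,0; 1,0,0,0] := by
  ext i j; fin_cases i <;> fin_cases j <;> simp [Lx, kron, σx, Matrix.vecHead, Matrix.vecTail]

lemma outer_eq : outer PsiPlus =
    !![(1:ℂ)/2,0,0,1/2; 0,0,0,0; 0,0,0,0; 1/2,0,0,1/2] := by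
  have h : ((Real.sqrt 2 : ℂ))⁻¹ * ((Real.sqrt 2 : ℂ))⁻¹ = 1/2 := by
    rw [← mul_inv, ← Complex.ofReal_mul, Real.mul_self_sqrt (by norm_num)]
    norm_num
  ext i j
  fin_cases i <;> fin_cases j <;>
    simp [outer, PsiPlus, Matrix.vecMulVec, Matrix.vecHead, Matrix.vecTail, Complex.conj_ofReal, h]


lemma quad_re' (ρ : Matrix (Fin 4) (Fin 4) ℂ) (h : ρ.PosSemidef) (x : Fin 4 → ℂ) :
    0 ≤ (star x ⬝ᵥ ρ *ᵥ x).re := by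
  have := h.dotProduct_mulVec_nonneg x
  rw [Complex.le_def] at this
  exact this.1

/-- with target `ρ̄ = Ψ₊Ψ₊*` and `X(ρ) = Tr(ρρ̄)`, for every state `ρ`:
`0 ≤ 1 - Tr(L_z ρ) = 2Λ₂(ρ) ≤ 2(1 - X(ρ))` and
`0 ≤ 1 - Tr(L_x ρ) = 1 - Γ(ρ) ≤ 4(1 - X(ρ))`. -/
theorem bounds_for_target_psi_plus (ρ : Matrix (Fin 4) (Fin 4) ℂ) (hρ : IsState ρ) :
    (0 ≤ 1 - ((Lz * ρ).trace).re ∧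
     1 - ((Lz * ρ).trace).re = 2 * Λ₂ ρ ∧
     2 * Λ₂ ρ ≤ 2 * (1 - ((ρ * outer PsiPlus).trace).re)) ∧
    (0 ≤ 1 - ((Lx * ρ).trace).re ∧
     1 - ((Lx * ρ).trace).re = 1 - Γ ρ ∧
     1 - Γ ρ ≤ 4 * (1 - ((ρ * outer PsiPlus).trace).re)) := by
  obtain ⟨hps, htr⟩ := hρ
  have hH := hps.1
  -- Hermitian entry facts
  have h30 : (ρ 3 0).re = (ρ 0 3).re := by
    have := congrFun (congrFun hH 3) 0
    simp [Matrix.conjTranspose_apply] at this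
    rw [← this, Complex.conj_re]
  have h21 : (ρ 2 1).re = (ρ 1 2).re := by
    have := congrFun (congrFun hH 2) 1
    simp [Matrix.conjTranspose_apply] at this
    rw [← this, Complex.conj_re]
  -- diagonal entries nonneg
  have d0 : 0 ≤ (ρ 0 0).re := by
    have := quad_re' ρ hps ![1,0,0,0]
    simp [dotProduct, Matrix.mulVec, Fin.sum_univ_four] at this; linarith
  have d1 : 0 ≤ (ρ 1 1).re := by
    have := quad_re' ρ hps ![0,1,0,0]
    simp [dotProduct, Matrix.mulVec, Fin.sum_univ_four] at this; linarith
  have d2 : 0 ≤ (ρ 2 2).re := by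
    have := quad_re' ρ hps ![0,0,1,0]
    simp [dotProduct, Matrix.mulVec, Fin.sum_univ_four] at this; linarith
  have d3 : 0 ≤ (ρ 3 3).re := by
    have := quad_re' ρ hps ![0,0,0,1]
    simp [dotProduct, Matrix.mulVec, Fin.sum_univ_four] at this; linarith
  -- off-diagonal bounds
  have q03p : 0 ≤ (ρ 0 0).re + (ρ 3 3).re + ((ρ 0 3).re + (ρ 3 0).re) := by
    have := quad_re' ρ hps ![1,0,0,1]
    simp [dotProduct, Matrix.mulVec, Fin.sum_univ_four] at this; linarith
  have q03m : 0 ≤ (ρ 0 0).re + (ρ 3 3).re - ((ρ 0 3).re + (ρ 3 0).re) := by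
    have := quad_re' ρ hps ![1,0,0,-1]
    simp [dotProduct, Matrix.mulVec, Fin.sum_univ_four] at this; linarith
  have q12p : 0 ≤ (ρ 1 1).re + (ρ 2 2).re + ((ρ 1 2).re + (ρ 2 1).re) := by
    have := quad_re' ρ hps ![0,1,1,0]
    simp [dotProduct, Matrix.mulVec, Fin.sum_univ_four] at this; linarith
  have q12m : 0 ≤ (ρ 1 1).re + (ρ 2 2).re - ((ρ 1 2).re + (ρ 2 1).re) := by
    have := quad_re' ρ hps ![0,1,-1,0]
    simp [dotProduct, Matrix.mulVec, Fin.sum_univ_four] at this; linarith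
  -- trace = 1
  have htr' : (ρ 0 0).re + (ρ 1 1).re + (ρ 2 2).re + (ρ 3 3).re = 1 := by
    have := congrArg Complex.re htr
    simp [Matrix.trace, Matrix.diag, Fin.sum_univ_four] at this; linarith
  -- trace formulas
  have hLz : ((Lz * ρ).trace).re = (ρ 0 0).re - (ρ 1 1).re - (ρ 2 2).re + (ρ 3 3).re := by
    simp [Lz_eq, Matrix.trace, Matrix.diag, Matrix.mul_apply, Fin.sum_univ_four, Matrix.vecHead, Matrix.vecTail] <;> ring
  have hLx : ((Lx * ρ).trace).re = (ρ 3 0).re + (ρ 2 1).re + (ρ 1 2).re + (ρ 0 3).re := by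
    simp [Lx_eq, Matrix.trace, Matrix.diag, Matrix.mul_apply, Fin.sum_univ_four, Matrix.vecHead, Matrix.vecTail] <;> ring
  have hX : ((ρ * outer PsiPlus).trace).re =
      ((ρ 0 0).re + (ρ 3 3).re + (ρ 0 3).re + (ρ 3 0).re) / 2 := by
    simp [outer_eq, Matrix.trace, Matrix.diag, Matrix.mul_apply, Fin.sum_univ_four, Matrix.vecHead, Matrix.vecTail] <;> ring
  rw [hLz, hLx, hX]
  unfold Λ₂ Γ
  constructor
  · refine ⟨by linarith, by linarith, by linarith⟩
  · refine ⟨by linarith, by linarith, by linarith⟩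
end
end
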